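/- arXiv:2310.15626 — 3 statements merged into one kernel-verified Lean document; each statement's English description precedes it below -/
import Mathlib

section
/- Let {A(k)}_{k≥0} be m×m row-stochastic matrices satisfying the periodical strong connectivity and weight assumptions, and set Φ_A(k,s) = A(k)A(k−1)⋯A(s) for k ≥ s. Then: (1) for each s ≥ 0 the limit Φ̄_A(s) = lim_{k→∞} Φ_A(k,s) exists; (2) Φ̄_A(s) = 1_m μ_sᵀ for some stochastic vector μ_s ∈ ℝ^m; (3) there exist a constant C > 0 and β ∈ (0,1), depending only on η, m and B, such that |Φ_A(k,s)_{ij} − (μ_s)_j| ≤ C β^{k−s} for all k ≥ s ≥ 0 and all i, j ∈ {1,…,m}. -/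
/-!
A stochastic matrix maps a vector to one whose entries lie between the vector's minimum and
maximum, so along the products `Φ_A(s + t, s)` the maxima of each column decrease and its minima
increase; the limit `μ_s` is squeezed between them. The positive diagonals keep positive
entries positive, and strong connectivity in every window of length `B` makes the support of a
column gain an index per window, so `Φ_A(s' + N, s')` with `N = (m - 1) B` is entrywise at least
`δ = η ^ (N + 1)`. Multiplying by such a matrix shrinks the spread `max - min` of a column by the
factor `1 - δ`, which gives the geometric rate.
-/

open Finset Matrix

/-- `Phi A s t` is the backward matrix product Φ_A(s+t, s) = A(s+t)·A(s+t−1)⋯A(s). -/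
def Phi {m : ℕ} (A : ℕ → Matrix (Fin m) (Fin m) ℝ) (s : ℕ) :
    ℕ → Matrix (Fin m) (Fin m) ℝ
  | 0 => A s
  | t + 1 => A (s + t + 1) * Phi A s t

section Oscillation

variable {ι : Type*} [Fintype ι]

noncomputable def osc (x : ι → ℝ) : ℝ := (⨆ i, x i) - ⨅ i, x i

lemma osc_nonneg [Nonempty ι] (x : ι → ℝ) : 0 ≤ osc x :=
  sub_nonneg.2 <| (ciInf_le (Finite.bddBelow_range x) (Classical.arbitrary ι)).trans
    (le_ciSup (Finite.bddAbove_range x) _)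

variable [DecidableEq ι] [Nonempty ι] {Q : Matrix ι ι ℝ} {δ : ℝ}

lemma mulVec_apply_le_iSup_sub (hQ : Q ∈ rowStochastic ℝ ι) (hδ : ∀ i l, δ ≤ Q i l)
    (x : ι → ℝ) (i : ι) : (Q *ᵥ x) i ≤ (⨆ l, x l) - δ * osc x := by
  obtain ⟨l₀, hl₀⟩ := exists_eq_ciInf_of_finite (f := x)
  set M := ⨆ l, x l
  have hgap : ∀ l, 0 ≤ M - x l := fun l => sub_nonneg.2 (le_ciSup (Finite.bddAbove_range x) l)
  have hQx : (Q *ᵥ x) i = M - ∑ l, Q i l * (M - x l) := by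
    simp only [mulVec, dotProduct, mul_sub, sum_sub_distrib, ← sum_mul,
      sum_row_of_mem_rowStochastic hQ, one_mul, sub_sub_cancel]
  have hl₀_le : Q i l₀ * (M - x l₀) ≤ ∑ l, Q i l * (M - x l) :=
    single_le_sum (f := fun l => Q i l * (M - x l))
      (fun l _ => mul_nonneg (nonneg_of_mem_rowStochastic hQ) (hgap l)) (mem_univ l₀)
  rw [hQx, osc, ← hl₀]
  nlinarith [mul_le_mul_of_nonneg_right (hδ i l₀) (hgap l₀)]

lemma iInf_add_le_mulVec_apply (hQ : Q ∈ rowStochastic ℝ ι) (hδ : ∀ i l, δ ≤ Q i l)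
    (x : ι → ℝ) (i : ι) : (⨅ l, x l) + δ * osc x ≤ (Q *ᵥ x) i := by
  obtain ⟨l₁, hl₁⟩ := exists_eq_ciSup_of_finite (f := x)
  set m := ⨅ l, x l
  have hgap : ∀ l, 0 ≤ x l - m := fun l => sub_nonneg.2 (ciInf_le (Finite.bddBelow_range x) l)
  have hQx : (Q *ᵥ x) i = m + ∑ l, Q i l * (x l - m) := by
    simp only [mulVec, dotProduct, mul_sub, sum_sub_distrib, ← sum_mul,
      sum_row_of_mem_rowStochastic hQ, one_mul, add_sub_cancel]
  have hl₁_le : Q i l₁ * (x l₁ - m) ≤ ∑ l, Q i l * (x l - m) :=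
    single_le_sum (f := fun l => Q i l * (x l - m))
      (fun l _ => mul_nonneg (nonneg_of_mem_rowStochastic hQ) (hgap l)) (mem_univ l₁)
  rw [hQx, osc, ← hl₁]
  nlinarith [mul_le_mul_of_nonneg_right (hδ i l₁) (hgap l₁)]

lemma mulVec_apply_mem_Icc (hQ : Q ∈ rowStochastic ℝ ι) (x : ι → ℝ) (i : ι) :
    (Q *ᵥ x) i ∈ Set.Icc (⨅ l, x l) (⨆ l, x l) := by
  have hQ₀ : ∀ i l, (0 : ℝ) ≤ Q i l := fun _ _ => nonneg_of_mem_rowStochastic hQ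
  constructor
  · simpa using iInf_add_le_mulVec_apply hQ hQ₀ x i
  · simpa using mulVec_apply_le_iSup_sub hQ hQ₀ x i

lemma osc_mulVec_le (hQ : Q ∈ rowStochastic ℝ ι) (hδ₀ : 0 ≤ δ) (hδ : ∀ i l, δ ≤ Q i l)
    (x : ι → ℝ) : osc (Q *ᵥ x) ≤ (1 - δ) * osc x := by
  have hsup : ⨆ i, (Q *ᵥ x) i ≤ (⨆ l, x l) - δ * osc x :=
    ciSup_le (mulVec_apply_le_iSup_sub hQ hδ x)
  have hinf : (⨅ l, x l) + δ * osc x ≤ ⨅ i, (Q *ᵥ x) i :=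
    le_ciInf (iInf_add_le_mulVec_apply hQ hδ x)
  have hosc : osc x = (⨆ l, x l) - ⨅ l, x l := rfl
  rw [osc, sub_mul, one_mul]
  linarith [mul_nonneg hδ₀ (osc_nonneg x)]

end Oscillation

section NonnegMatrix

variable {ι : Type*} [Fintype ι] {Q P : Matrix ι ι ℝ}

lemma single_le_mul_apply (hQ : ∀ i l, 0 ≤ Q i l) (hP : ∀ l j, 0 ≤ P l j) (i l j : ι) :
    Q i l * P l j ≤ (Q * P) i j :=
  single_le_sum (f := fun l => Q i l * P l j) (fun l _ => mul_nonneg (hQ i l) (hP l j))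
    (mem_univ l)

lemma mul_apply_pos (hQ : ∀ i l, 0 ≤ Q i l) (hP : ∀ l j, 0 ≤ P l j) {i l j : ι}
    (hil : 0 < Q i l) (hlj : 0 < P l j) : 0 < (Q * P) i j :=
  (mul_pos hil hlj).trans_le (single_le_mul_apply hQ hP i l j)

lemma mul_le_mul_apply_of_pos (hQ : ∀ i l, 0 ≤ Q i l) (hP : ∀ l j, 0 ≤ P l j) {a b : ℝ}
    (hb : 0 ≤ b) (ha : ∀ i l, 0 < Q i l → a ≤ Q i l) (hb' : ∀ l j, 0 < P l j → b ≤ P l j)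
    {i j : ι} (hij : 0 < (Q * P) i j) : a * b ≤ (Q * P) i j := by
  obtain ⟨l, -, hl⟩ := (sum_pos_iff_of_nonneg fun l _ => mul_nonneg (hQ i l) (hP l j)).1 hij
  have hil := pos_of_mul_pos_left hl (hP l j)
  have hlj := pos_of_mul_pos_right hl (hQ i l)
  exact (mul_le_mul (ha i l hil) (hb' l j hlj) hb hil.le).trans (single_le_mul_apply hQ hP i l j)

end NonnegMatrix

lemma Relation.ReflTransGen.exists_rel_mem_not_mem {α : Type*} {r : α → α → Prop}
    {S : Set α} {u v : α} (h : Relation.ReflTransGen r u v) (hu : u ∈ S) (hv : v ∉ S) :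
    ∃ a ∈ S, ∃ b ∉ S, r a b := by
  induction h with
  | refl => exact absurd hu hv
  | @tail b c _ hbc ih =>
    by_cases hb : b ∈ S
    · exact ⟨b, hb, c, hv, hbc⟩
    · exact ih hb

lemma Finset.eq_univ_of_ssubset_succ {α : Type*} [Fintype α] [DecidableEq α]
    {S : ℕ → Finset α} (hmono : Monotone S) (hgrow : ∀ r, S r ≠ univ → S r ⊂ S (r + 1))
    (h₀ : (S 0).Nonempty) : S (Fintype.card α - 1) = univ := by
  have hcard : ∀ r, min (r + 1) (Fintype.card α) ≤ #(S r) := by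
    intro r
    induction r with
    | zero => simpa using Nat.min_le_left 1 _ |>.trans (card_pos.2 h₀)
    | succ r ih =>
      by_cases hr : S r = univ
      · have hfull : S (r + 1) = univ := univ_subset_iff.1 (hr ▸ hmono r.le_succ)
        rw [hfull, card_univ]
        omega
      · have := card_lt_card (hgrow r hr)
        omega
  have hpos : 0 < Fintype.card α := card_pos.2 h₀ |>.trans_le (card_le_univ _)
  refine eq_univ_of_card _ (le_antisymm (card_le_univ _) ?_)
  have := hcard (Fintype.card α - 1)
  omega

section Convergence

open Filter Topology

lemma isClosed_rowStochastic {ι : Type*} [Fintype ι] [DecidableEq ι] :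
    IsClosed (rowStochastic ℝ ι : Set (Matrix ι ι ℝ)) := by
  have hset : (rowStochastic ℝ ι : Set (Matrix ι ι ℝ)) =
      (⋂ i, ⋂ j, {M | 0 ≤ M i j}) ∩ ⋂ i, {M | ∑ j, M i j = 1} := by
    ext M
    simp [mem_rowStochastic_iff_sum]
  rw [hset]
  refine (isClosed_iInter fun i => isClosed_iInter fun j => ?_).inter
    (isClosed_iInter fun i => ?_)
  · exact isClosed_le continuous_const ((continuous_apply j).comp (continuous_apply i))
  · exact isClosed_eq (continuous_finsetSum _ fun j _ =>
      (continuous_apply j).comp (continuous_apply i)) continuous_const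

lemma Matrix.tendsto_of_abs_sub_le_geometric {ι κ : Type*} {M : ℕ → Matrix ι κ ℝ}
    {L : Matrix ι κ ℝ} {C β : ℝ} (hβ₀ : 0 ≤ β) (hβ₁ : β < 1)
    (h : ∀ t i j, |M t i j - L i j| ≤ C * β ^ t) : Tendsto M atTop (𝓝 L) := by
  have hgeom : Tendsto (fun t => C * β ^ t) atTop (𝓝 0) := by
    simpa using (tendsto_pow_atTop_nhds_zero_of_lt_one hβ₀ hβ₁).const_mul C
  refine tendsto_pi_nhds.2 fun i => tendsto_pi_nhds.2 fun j => ?_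
  exact (tendsto_iff_norm_sub_tendsto_zero.2 (squeeze_zero (fun _ => norm_nonneg _)
    (fun t => h t i j) hgeom))

lemma exists_pow_div_le_mul_pow {γ : ℝ} (hγ₀ : 0 < γ) (hγ₁ : γ < 1) {p : ℕ} (hp : p ≠ 0) :
    ∃ C > 0, ∃ β ∈ Set.Ioo (0 : ℝ) 1, ∀ t, γ ^ (t / p) ≤ C * β ^ t := by
  set β := γ ^ ((p : ℝ)⁻¹)
  have hβ₀ : 0 < β := Real.rpow_pos_of_pos hγ₀ _
  have hβ₁ : β < 1 := Real.rpow_lt_one hγ₀.le hγ₁ (by positivity)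
  have hβp : β ^ p = γ := Real.rpow_inv_natCast_pow hγ₀.le hp
  refine ⟨γ⁻¹, inv_pos.2 hγ₀, β, ⟨hβ₀, hβ₁⟩, fun t => ?_⟩
  have hrem : γ ≤ β ^ (t % p) :=
    hβp ▸ pow_le_pow_of_le_one hβ₀.le hβ₁.le (Nat.mod_lt t (Nat.pos_of_ne_zero hp)).le
  calc γ ^ (t / p) = γ⁻¹ * (γ ^ (t / p) * γ) := by field_simp
    _ ≤ γ⁻¹ * (γ ^ (t / p) * β ^ (t % p)) := by gcongr
    _ = γ⁻¹ * β ^ t := by conv_rhs => rw [← Nat.div_add_mod t p, pow_add, pow_mul, hβp]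

end Convergence

section Phi

variable {m : ℕ} {A : ℕ → Matrix (Fin m) (Fin m) ℝ}

lemma Phi_add (A : ℕ → Matrix (Fin m) (Fin m) ℝ) (s t u : ℕ) :
    Phi A s (t + u + 1) = Phi A (s + t + 1) u * Phi A s t := by
  induction u with
  | zero => rfl
  | succ u ih =>
    rw [← add_assoc, Phi, ih, Phi, ← Matrix.mul_assoc]
    ring_nf

lemma Phi_mem_rowStochastic (hA : ∀ k, A k ∈ rowStochastic ℝ (Fin m)) (s t : ℕ) :
    Phi A s t ∈ rowStochastic ℝ (Fin m) := by
  induction t with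
  | zero => exact hA s
  | succ t ih => exact mul_mem (hA _) ih

lemma Phi_pos_of_le (hA : ∀ k, A k ∈ rowStochastic ℝ (Fin m)) (hdiag : ∀ k i, 0 < A k i i)
    {s t t' : ℕ} (htt' : t ≤ t') {i j : Fin m} (h : 0 < Phi A s t i j) :
    0 < Phi A s t' i j := by
  induction t', htt' using Nat.le_induction with
  | base => exact h
  | succ t' _ ih =>
    exact mul_apply_pos (fun _ _ => nonneg_of_mem_rowStochastic (hA _))
      (fun _ _ => nonneg_of_mem_rowStochastic (Phi_mem_rowStochastic hA s t')) (hdiag _ i) ih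

lemma pow_le_Phi_of_pos (hA : ∀ k, A k ∈ rowStochastic ℝ (Fin m)) {η : ℝ} (hη : 0 ≤ η)
    (hAunif : ∀ k i j, 0 < A k i j → η ≤ A k i j) (s t : ℕ) {i j : Fin m}
    (h : 0 < Phi A s t i j) : η ^ (t + 1) ≤ Phi A s t i j := by
  induction t generalizing i j with
  | zero => simpa [Phi] using hAunif s i j h
  | succ t ih =>
    rw [pow_succ']
    exact mul_le_mul_apply_of_pos (fun _ _ => nonneg_of_mem_rowStochastic (hA _))
      (fun _ _ => nonneg_of_mem_rowStochastic (Phi_mem_rowStochastic hA s t)) (by positivity)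
      (hAunif _) (fun _ _ => ih) h

variable {B : ℕ}
  (hconn : ∀ k : ℕ, ∀ u v : Fin m,
    Relation.ReflTransGen (fun jj ii : Fin m => ∃ t, k ≤ t ∧ t < k + B ∧ 0 < A t ii jj) u v)
include hconn

lemma exists_Phi_pos_of_not_pos (hA : ∀ k, A k ∈ rowStochastic ℝ (Fin m))
    (hdiag : ∀ k i, 0 < A k i i) (s t : ℕ) {v j : Fin m} (hv : ¬ 0 < Phi A s t v j) :
    ∃ b, ¬ 0 < Phi A s t b j ∧ 0 < Phi A s (t + B) b j := by
  have hj : 0 < Phi A s t j j := Phi_pos_of_le hA hdiag t.zero_le (hdiag s j)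
  obtain ⟨a, ha, b, hb, t', ht', ht'B, hba⟩ := (hconn (s + t + 1) j v).exists_rel_mem_not_mem
    (S := {x | 0 < Phi A s t x j}) hj hv
  obtain ⟨d, hdB, rfl⟩ : ∃ d, d < B ∧ t' = s + (t + d) + 1 := ⟨t' - (s + t + 1), by omega, by omega⟩
  have ha' : 0 < Phi A s (t + d) a j := Phi_pos_of_le hA hdiag (Nat.le_add_right t d) ha
  have hb' : 0 < Phi A s (t + d + 1) b j :=
    mul_apply_pos (fun _ _ => nonneg_of_mem_rowStochastic (hA _))
      (fun _ _ => nonneg_of_mem_rowStochastic (Phi_mem_rowStochastic hA s _)) hba ha'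
  exact ⟨b, hb, Phi_pos_of_le hA hdiag (by omega) hb'⟩

lemma Phi_pos (hA : ∀ k, A k ∈ rowStochastic ℝ (Fin m)) (hdiag : ∀ k i, 0 < A k i i)
    (s : ℕ) (i j : Fin m) : 0 < Phi A s ((m - 1) * B) i j := by
  set S : ℕ → Finset (Fin m) := fun r => {v | 0 < Phi A s (r * B) v j}
  have hS : ∀ r v, v ∈ S r ↔ 0 < Phi A s (r * B) v j := fun r v => by simp [S]
  have hmono : Monotone S := fun r r' hrr' v => by
    simpa only [hS] using Phi_pos_of_le hA hdiag (Nat.mul_le_mul_right B hrr')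
  have hgrow : ∀ r, S r ≠ univ → S r ⊂ S (r + 1) := by
    intro r hr
    obtain ⟨v, hv⟩ := not_forall.1 (mt eq_univ_of_forall hr)
    obtain ⟨b, hb, hb'⟩ := exists_Phi_pos_of_not_pos hconn hA hdiag s (r * B) ((hS r v).not.1 hv)
    refine (ssubset_iff_of_subset (hmono r.le_succ)).2 ⟨b, ?_, (hS r b).not.2 hb⟩
    rwa [hS, Nat.succ_mul]
  have hfull := eq_univ_of_ssubset_succ hmono hgrow ⟨j, (hS 0 j).2 (by simpa [Phi] using hdiag s j)⟩
  rw [Fintype.card_fin] at hfull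
  exact (hS _ i).1 (hfull ▸ mem_univ i)

end Phi

section PhiLimit

variable {m : ℕ} {A : ℕ → Matrix (Fin m) (Fin m) ℝ}

noncomputable def PhiLimit (A : ℕ → Matrix (Fin m) (Fin m) ℝ) (s : ℕ) (j : Fin m) : ℝ :=
  ⨆ t, ⨅ i, Phi A s t i j

variable [NeZero m] (hA : ∀ k, A k ∈ rowStochastic ℝ (Fin m))
include hA

lemma PhiLimit_mem_Icc (s t : ℕ) (j : Fin m) :
    PhiLimit A s j ∈ Set.Icc (⨅ i, Phi A s t i j) (⨆ i, Phi A s t i j) := by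
  have hstep : ∀ t i, Phi A s (t + 1) i j ∈ Set.Icc (⨅ l, Phi A s t l j) (⨆ l, Phi A s t l j) :=
    fun t i => mulVec_apply_mem_Icc (hA _) (fun l => Phi A s t l j) i
  have hmin : Monotone fun t => ⨅ i, Phi A s t i j :=
    monotone_nat_of_le_succ fun t => le_ciInf fun i => (hstep t i).1
  have hmax : Antitone fun t => ⨆ i, Phi A s t i j :=
    antitone_nat_of_succ_le fun t => ciSup_le fun i => (hstep t i).2
  have hle : (fun t => ⨅ i, Phi A s t i j) ≤ fun t => ⨆ i, Phi A s t i j :=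
    fun t => sub_nonneg.1 (osc_nonneg _)
  exact Set.mem_iInter.1 (hmin.ciSup_mem_iInter_Icc_of_antitone hmax hle) t

lemma abs_Phi_sub_PhiLimit_le_osc (s t : ℕ) (i j : Fin m) :
    |Phi A s t i j - PhiLimit A s j| ≤ osc fun i => Phi A s t i j := by
  obtain ⟨hlo, hhi⟩ := PhiLimit_mem_Icc hA s t j
  have hi₁ := ciInf_le (Finite.bddBelow_range fun i => Phi A s t i j) i
  have hi₂ := le_ciSup (Finite.bddAbove_range fun i => Phi A s t i j) i
  rw [abs_le, osc]
  constructor <;> linarith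

lemma osc_Phi_le_one (s t : ℕ) (j : Fin m) : osc (fun i => Phi A s t i j) ≤ 1 := by
  have hsup : ⨆ i, Phi A s t i j ≤ 1 :=
    ciSup_le fun i => le_one_of_mem_rowStochastic (Phi_mem_rowStochastic hA s t)
  have hinf : 0 ≤ ⨅ i, Phi A s t i j :=
    le_ciInf fun i => nonneg_of_mem_rowStochastic (Phi_mem_rowStochastic hA s t)
  rw [osc]
  linarith

lemma osc_Phi_le_pow {N : ℕ} {δ : ℝ} (hδ₀ : 0 ≤ δ) (hδ : ∀ s i l, δ ≤ Phi A s N i l)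
    (s t : ℕ) (j : Fin m) : osc (fun i => Phi A s t i j) ≤ (1 - δ) ^ (t / (N + 1)) := by
  have hδ₁ : 0 ≤ 1 - δ :=
    sub_nonneg.2 ((hδ 0 0 0).trans (le_one_of_mem_rowStochastic (Phi_mem_rowStochastic hA 0 N)))
  have key : ∀ q r, osc (fun i => Phi A s ((N + 1) * q + r) i j) ≤ (1 - δ) ^ q := by
    intro q r
    induction q with
    | zero => simpa using osc_Phi_le_one hA s r j
    | succ q ih =>
      have hcol : (fun i => Phi A s ((N + 1) * (q + 1) + r) i j) =
          Phi A (s + ((N + 1) * q + r) + 1) N *ᵥ fun i => Phi A s ((N + 1) * q + r) i j := by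
        rw [show (N + 1) * (q + 1) + r = (N + 1) * q + r + N + 1 by ring, Phi_add]
        rfl
      rw [hcol, pow_succ']
      exact (osc_mulVec_le (Phi_mem_rowStochastic hA _ _) hδ₀ (hδ _) _).trans
        (mul_le_mul_of_nonneg_left ih hδ₁)
  simpa only [Nat.div_add_mod] using key (t / (N + 1)) (t % (N + 1))

end PhiLimit

lemma exists_abs_Phi_sub_PhiLimit_le {m : ℕ} [NeZero m] {A : ℕ → Matrix (Fin m) (Fin m) ℝ}
    (hA : ∀ k, A k ∈ rowStochastic ℝ (Fin m)) {η : ℝ} (hη₀ : 0 < η) (hη₁ : η < 1)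
    (hAunif : ∀ k i j, 0 < A k i j → η ≤ A k i j) (hAdiag : ∀ k i, η ≤ A k i i) {B : ℕ}
    (hconn : ∀ k : ℕ, ∀ u v : Fin m,
      Relation.ReflTransGen (fun jj ii : Fin m => ∃ t, k ≤ t ∧ t < k + B ∧ 0 < A t ii jj) u v) :
    ∃ C > 0, ∃ β ∈ Set.Ioo (0 : ℝ) 1,
      ∀ s t i j, |Phi A s t i j - PhiLimit A s j| ≤ C * β ^ t := by
  set N := (m - 1) * B
  have hdiag : ∀ k i, 0 < A k i i := fun k i => hη₀.trans_le (hAdiag k i)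
  have hscrambling : ∀ s i l, η ^ (N + 1) ≤ Phi A s N i l := fun s i l =>
    pow_le_Phi_of_pos hA hη₀.le hAunif s N (Phi_pos hconn hA hdiag s i l)
  have hδ₀ : 0 < η ^ (N + 1) := pow_pos hη₀ _
  have hδ₁ : η ^ (N + 1) < 1 := pow_lt_one₀ hη₀.le hη₁ N.succ_ne_zero
  obtain ⟨C, hC, β, hβ, hgeom⟩ :=
    exists_pow_div_le_mul_pow (sub_pos.2 hδ₁) (sub_lt_self 1 hδ₀) N.succ_ne_zero
  refine ⟨C, hC, β, hβ, fun s t i j => ?_⟩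
  calc |Phi A s t i j - PhiLimit A s j| ≤ osc fun i => Phi A s t i j :=
        abs_Phi_sub_PhiLimit_le_osc hA s t i j
    _ ≤ (1 - η ^ (N + 1)) ^ (t / (N + 1)) := osc_Phi_le_pow hA hδ₀.le hscrambling s t j
    _ ≤ C * β ^ t := hgeom t

theorem stmt4_general (m : ℕ) (hm : 1 ≤ m)
    (A : ℕ → Matrix (Fin m) (Fin m) ℝ)
    (hAnn : ∀ k, ∀ i j, 0 ≤ A k i j)
    (hArow : ∀ k, ∀ i, ∑ j, A k i j = 1)
    (η : ℝ) (hη : η ∈ Set.Ioo (0 : ℝ) 1)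
    (hAunif : ∀ k, ∀ i j, 0 < A k i j → η ≤ A k i j)
    (hAdiag : ∀ k, ∀ i, η ≤ A k i i)
    (B : ℕ)
    (hconn : ∀ k : ℕ, ∀ u v : Fin m,
      Relation.ReflTransGen
        (fun jj ii : Fin m => ∃ t, k ≤ t ∧ t < k + B ∧ 0 < A t ii jj) u v) :
    ∃ μ : ℕ → (Fin m → ℝ),
      (∀ s, (∀ j, 0 ≤ μ s j) ∧ ∑ j, μ s j = 1) ∧
      (∀ s, Filter.Tendsto (fun k => Phi A s (k - s)) Filter.atTop
        (nhds (Matrix.of fun _ j => μ s j))) ∧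
      (∃ C : ℝ, 0 < C ∧ ∃ β ∈ Set.Ioo (0 : ℝ) 1,
        ∀ s k, s ≤ k → ∀ i j, |Phi A s (k - s) i j - μ s j| ≤ C * β ^ (k - s)) := by
  have : NeZero m := ⟨by omega⟩
  have hA : ∀ k, A k ∈ rowStochastic ℝ (Fin m) :=
    fun k => mem_rowStochastic_iff_sum.2 ⟨hAnn k, hArow k⟩
  obtain ⟨C, hC, β, hβ, hbound⟩ :=
    exists_abs_Phi_sub_PhiLimit_le hA hη.1 hη.2 hAunif hAdiag hconn
  have hlim : ∀ s, Filter.Tendsto (Phi A s) Filter.atTop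
      (nhds (Matrix.of fun _ j => PhiLimit A s j)) :=
    fun s => Matrix.tendsto_of_abs_sub_le_geometric hβ.1.le hβ.2 (hbound s)
  have hstoch : ∀ s, Matrix.of (fun _ j => PhiLimit A s j) ∈ rowStochastic ℝ (Fin m) :=
    fun s => isClosed_rowStochastic.mem_of_tendsto (hlim s)
      (Filter.Eventually.of_forall (Phi_mem_rowStochastic hA s))
  refine ⟨PhiLimit A, fun s => ⟨fun j => ?_, ?_⟩, fun s => (hlim s).comp
    (Filter.tendsto_sub_atTop_nat s), C, hC, β, hβ, fun s k _ i j => hbound s (k - s) i j⟩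
  · exact nonneg_of_mem_rowStochastic (hstoch s) (i := 0)
  · exact sum_row_of_mem_rowStochastic (hstoch s) 0

/-- Let {A(k)} be m×m row-stochastic matrices satisfying the periodical
strong connectivity and weight assumptions, and Φ_A(k,s) = A(k)A(k−1)⋯A(s) for k ≥ s.
Then (1) for each s the limit Φ̄_A(s) = lim_{k→∞} Φ_A(k,s) exists; (2) it equals
1_m μ_sᵀ for a stochastic vector μ_s; (3) there are C > 0 and β ∈ (0,1) with
|Φ_A(k,s)_{ij} − (μ_s)_j| ≤ C β^{k−s} for all k ≥ s and all i, j. -/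
theorem stmt4 (m : ℕ) (hm : 1 ≤ m)
    (A : ℕ → Matrix (Fin m) (Fin m) ℝ)
    (hAnn : ∀ k, ∀ i j, 0 ≤ A k i j)
    (hArow : ∀ k, ∀ i, ∑ j, A k i j = 1)
    (η : ℝ) (hη : η ∈ Set.Ioo (0 : ℝ) 1)
    (hAunif : ∀ k, ∀ i j, 0 < A k i j → η ≤ A k i j)
    (hAdiag : ∀ k, ∀ i, η ≤ A k i i)
    (B : ℕ) (hB : 0 < B)
    (hconn : ∀ k : ℕ, ∀ u v : Fin m,
      Relation.ReflTransGen
        (fun jj ii : Fin m => ∃ t, k ≤ t ∧ t < k + B ∧ 0 < A t ii jj) u v) :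
    ∃ μ : ℕ → (Fin m → ℝ),
      (∀ s, (∀ j, 0 ≤ μ s j) ∧ ∑ j, μ s j = 1) ∧
      (∀ s, Filter.Tendsto (fun k => Phi A s (k - s)) Filter.atTop
        (nhds (Matrix.of fun _ j => μ s j))) ∧
      (∃ C : ℝ, 0 < C ∧ ∃ β ∈ Set.Ioo (0 : ℝ) 1,
        ∀ s k, s ≤ k → ∀ i j, |Phi A s (k - s) i j - μ s j| ≤ C * β ^ (k - s)) :=
  stmt4_general m hm A hAnn hArow η hη hAunif hAdiag B hconn
end

section
/- Let {b_k}, {c_k}, {d_k} be non-negative real sequences such that ∑_{k=0}^∞ c_k < ∞ and b_{k+1} ≤ b_k − d_k + c_k for all k ≥ 1. Then the sequence {b_k} converges (to a finite limit) and ∑_{k=0}^∞ d_k < ∞. -/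
/-- Let {b_k}, {c_k}, {d_k} be non-negative real sequences such that
∑ c_k < ∞ and b_{k+1} ≤ b_k − d_k + c_k for all k ≥ 1. Then {b_k} converges to a
finite limit and ∑ d_k < ∞. -/
theorem stmt6 (b c d : ℕ → ℝ)
    (hb : ∀ k, 0 ≤ b k) (hc : ∀ k, 0 ≤ c k) (hd : ∀ k, 0 ≤ d k)
    (hcsum : Summable c)
    (hrec : ∀ k, 1 ≤ k → b (k + 1) ≤ b k - d k + c k) :
    (∃ L : ℝ, Filter.Tendsto b Filter.atTop (nhds L)) ∧ Summable d := by
  set T : ℕ → ℝ := fun n => ∑' j, c (j + n) with hT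
  have hTsum : ∀ n, Summable (fun j => c (j + n)) := fun n =>
    (summable_nat_add_iff n).mpr hcsum
  have hTnonneg : ∀ n, 0 ≤ T n := fun n => tsum_nonneg (fun j => hc _)
  have hTrec : ∀ n, T n = c n + T (n + 1) := by
    intro n
    have := Summable.tsum_eq_zero_add (hTsum n)
    simp only [zero_add] at this
    rw [hT]
    simp only [this]
    congr 1
    apply tsum_congr
    intro j
    congr 1
    omega
  set g : ℕ → ℝ := fun k => b (k + 1) + T (k + 1) with hg
  have hgnonneg : ∀ k, 0 ≤ g k := fun k => add_nonneg (hb _) (hTnonneg _)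
  have hstep : ∀ k, g (k + 1) + d (k + 1) ≤ g k := by
    intro k
    have h1 := hrec (k + 1) (by omega)
    have h2 := hTrec (k + 1)
    simp only [hg]
    nlinarith [h1, h2]
  have hant : Antitone g := antitone_nat_of_succ_le (fun k => by
    have := hstep k
    have := hd (k + 1)
    linarith)
  have hbdd : BddBelow (Set.range g) := ⟨0, by rintro x ⟨k, rfl⟩; exact hgnonneg k⟩
  have hgtend : Filter.Tendsto g Filter.atTop (nhds (⨅ k, g k)) :=
    tendsto_atTop_ciInf hant hbdd
  have hT0 : Filter.Tendsto T Filter.atTop (nhds 0) := by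
    simpa using tendsto_sum_nat_add c
  have hT1 : Filter.Tendsto (fun k => T (k + 1)) Filter.atTop (nhds 0) :=
    hT0.comp (Filter.tendsto_add_atTop_nat 1)
  have hbtend : Filter.Tendsto (fun k => b (k + 1)) Filter.atTop
      (nhds ((⨅ k, g k) - 0)) := by
    have : (fun k => b (k + 1)) = fun k => g k - T (k + 1) := by
      funext k; simp [hg]
    rw [this]
    exact hgtend.sub hT1
  constructor
  · exact ⟨(⨅ k, g k) - 0, (Filter.tendsto_add_atTop_iff_nat 1).mp hbtend⟩
  · have hsum : ∀ n, ∑ i ∈ Finset.range n, d (i + 1) + g n ≤ g 0 := by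
      intro n
      induction n with
      | zero => simp
      | succ n ih =>
        rw [Finset.sum_range_succ]
        have := hstep n
        linarith
    have hd1 : Summable (fun i => d (i + 1)) := by
      apply summable_of_sum_range_le (c := g 0) (fun i => hd _)
      intro n
      have := hsum n
      have := hgnonneg n
      linarith
    exact (summable_nat_add_iff 1).mp hd1
end

section
/- Let β ∈ (0,1), let C₂, C₃, C₄ ≥ 0 be constants, and let {u_k} and {α_k} be sequences of non-negative reals with lim_{k→∞} α_k = 0, ∑_{k} α_k² < ∞, and u_{k+1} ≤ C₂ β^{k−1} + C₃ ∑_{l=1}^{k−1} β^{k−1−l} α_l + C₄ α_k for all k ≥ 1. Then lim_{k→∞} u_k = 0 and ∑_{k} α_k u_k < ∞. -/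
/-!
Since `u ≥ 0`, the recursion bounds `u (k + 1) ^ 2` by `v k ^ 2`, where `v k` is its
right-hand side. Each of the three terms of `v` is square-summable: the first is geometric,
the last is `α`, and by Cauchy–Schwarz the square of the geometric convolution of `α` is at
most `(1 - β)⁻¹` times the geometric convolution of `α ^ 2`, a Cauchy product of two summable
sequences. Hence `u` is square-summable, so `u → 0`, and `α * u` is summable as the product
of two `ℓ²` sequences.
-/

open Filter Finset Topology

section SquareSummable

variable {ι : Type*} {f g : ι → ℝ}

lemma Summable.sq_add (hf : Summable fun i => f i ^ 2) (hg : Summable fun i => g i ^ 2) :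
    Summable fun i => (f i + g i) ^ 2 :=
  .of_nonneg_of_le (fun _ => sq_nonneg _)
    (fun i => by nlinarith [sq_nonneg (f i - g i)]) ((hf.add hg).mul_left 2)

lemma Summable.sq_const_mul (c : ℝ) (hf : Summable fun i => f i ^ 2) :
    Summable fun i => (c * f i) ^ 2 := by
  simpa only [mul_pow] using hf.mul_left (c ^ 2)

lemma Summable.mul_of_summable_sq (hf : Summable fun i => f i ^ 2)
    (hg : Summable fun i => g i ^ 2) : Summable fun i => f i * g i :=
  .of_norm_bounded ((hf.add hg).div_const 2) fun i => by
    rw [Real.norm_eq_abs, abs_mul, ← sq_abs (f i), ← sq_abs (g i)]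
    linarith [two_mul_le_add_sq |f i| |g i|]

end SquareSummable

lemma tendsto_zero_of_summable_sq {f : ℕ → ℝ} (hf : Summable fun k => f k ^ 2) :
    Tendsto f atTop (𝓝 0) := by
  rw [tendsto_zero_iff_abs_tendsto_zero]
  simpa [Real.sqrt_sq_eq_abs, Function.comp_def] using hf.tendsto_atTop_zero.sqrt

section GeometricConvolution

variable {β : ℝ}

lemma sum_Ico_pow_sub_le (hβ0 : 0 ≤ β) (hβ1 : β < 1) (m k : ℕ) :
    ∑ l ∈ Ico m k, β ^ (k - 1 - l) ≤ (1 - β)⁻¹ := by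
  calc ∑ l ∈ Ico m k, β ^ (k - 1 - l)
      ≤ ∑ l ∈ range k, β ^ (k - 1 - l) :=
        sum_le_sum_of_subset_of_nonneg
          (by rw [range_eq_Ico]; exact Ico_subset_Ico_left m.zero_le)
          (fun _ _ _ => pow_nonneg hβ0 _)
    _ = ∑ j ∈ Ico 0 k, β ^ j := by rw [← range_eq_Ico, sum_range_reflect (β ^ ·) k]
    _ ≤ (1 - β)⁻¹ := by simpa [one_div] using geom_sum_Ico_le_of_lt_one hβ0 hβ1 (m := 0)

lemma sq_sum_Ico_pow_mul_le (hβ0 : 0 ≤ β) (hβ1 : β < 1) (a : ℕ → ℝ) (m k : ℕ) :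
    (∑ l ∈ Ico m k, β ^ (k - 1 - l) * a l) ^ 2
      ≤ (1 - β)⁻¹ * ∑ l ∈ range k, a l ^ 2 * β ^ (k - 1 - l) := by
  calc (∑ l ∈ Ico m k, β ^ (k - 1 - l) * a l) ^ 2
      ≤ (∑ l ∈ Ico m k, β ^ (k - 1 - l)) * ∑ l ∈ Ico m k, a l ^ 2 * β ^ (k - 1 - l) :=
        sum_sq_le_sum_mul_sum_of_sq_le_mul _ (fun _ _ => pow_nonneg hβ0 _)
          (fun _ _ => mul_nonneg (sq_nonneg _) (pow_nonneg hβ0 _)) (fun _ _ => le_of_eq (by ring))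
    _ ≤ (1 - β)⁻¹ * ∑ l ∈ range k, a l ^ 2 * β ^ (k - 1 - l) :=
        mul_le_mul (sum_Ico_pow_sub_le hβ0 hβ1 m k)
          (sum_le_sum_of_subset_of_nonneg
            (by rw [range_eq_Ico]; exact Ico_subset_Ico_left m.zero_le)
            (fun _ _ _ => mul_nonneg (sq_nonneg _) (pow_nonneg hβ0 _)))
          (sum_nonneg fun _ _ => mul_nonneg (sq_nonneg _) (pow_nonneg hβ0 _))
          (inv_nonneg.2 (sub_nonneg.2 hβ1.le))

lemma summable_sum_range_sq_mul_pow (hβ0 : 0 ≤ β) (hβ1 : β < 1) {a : ℕ → ℝ}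
    (ha : Summable fun k => a k ^ 2) :
    Summable fun k => ∑ l ∈ range k, a l ^ 2 * β ^ (k - 1 - l) := by
  rw [← summable_nat_add_iff 1]
  simp_rw [Nat.add_sub_cancel]
  exact summable_sum_mul_range_of_summable_mul <| ha.mul_of_nonneg
    (summable_geometric_of_lt_one hβ0 hβ1) (fun _ => sq_nonneg _) (fun _ => pow_nonneg hβ0 _)

lemma summable_sq_sum_Ico_pow_mul (hβ0 : 0 ≤ β) (hβ1 : β < 1) {a : ℕ → ℝ}
    (ha : Summable fun k => a k ^ 2) (m : ℕ) :
    Summable fun k => (∑ l ∈ Ico m k, β ^ (k - 1 - l) * a l) ^ 2 :=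
  .of_nonneg_of_le (fun _ => sq_nonneg _) (sq_sum_Ico_pow_mul_le hβ0 hβ1 a m)
    ((summable_sum_range_sq_mul_pow hβ0 hβ1 ha).mul_left _)

end GeometricConvolution

theorem stmt11_general (β C₂ C₃ C₄ : ℝ) (hβ : β ∈ Set.Ioo (0 : ℝ) 1)
    (u α : ℕ → ℝ) (hu : ∀ k, 0 ≤ u k)
    (hαsq : Summable (fun k => (α k) ^ 2))
    (hrec : ∀ k, 1 ≤ k →
      u (k + 1) ≤ C₂ * β ^ (k - 1) + C₃ * ∑ l ∈ Finset.Ico 1 k, β ^ (k - 1 - l) * α l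
          + C₄ * α k) :
    Filter.Tendsto u Filter.atTop (nhds 0) ∧ Summable (fun k => α k * u k) := by
  obtain ⟨hβ0, hβ1⟩ := hβ
  have hgeom : Summable fun k => (β ^ (k - 1)) ^ 2 := by
    rw [← summable_nat_add_iff 1]
    simpa only [Nat.add_sub_cancel, ← pow_mul, mul_comm] using
      summable_geometric_of_lt_one (sq_nonneg β) (pow_lt_one₀ hβ0.le hβ1 two_ne_zero)
  have hbound : Summable fun k =>
      (C₂ * β ^ (k - 1) + C₃ * ∑ l ∈ Ico 1 k, β ^ (k - 1 - l) * α l + C₄ * α k) ^ 2 :=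
    ((hgeom.sq_const_mul C₂).sq_add
      ((summable_sq_sum_Ico_pow_mul hβ0.le hβ1 hαsq 1).sq_const_mul C₃)).sq_add
      (hαsq.sq_const_mul C₄)
  have hu_sq : Summable fun k => u k ^ 2 := by
    rw [← summable_nat_add_iff 2]
    refine .of_nonneg_of_le (fun _ => sq_nonneg _) (fun k => ?_)
      ((summable_nat_add_iff 1).2 hbound)
    exact pow_le_pow_left₀ (hu _) (hrec (k + 1) k.succ_pos) 2
  exact ⟨tendsto_zero_of_summable_sq hu_sq, hαsq.mul_of_summable_sq hu_sq⟩

/-- Let β ∈ (0,1), C₂, C₃, C₄ ≥ 0, and {u_k}, {α_k} non-negative with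
α_k → 0, ∑ α_k² < ∞ and u_{k+1} ≤ C₂ β^{k−1} + C₃ ∑_{l=1}^{k−1} β^{k−1−l} α_l + C₄ α_k
for all k ≥ 1. Then u_k → 0 and ∑ α_k u_k < ∞. -/
theorem stmt11 (β C₂ C₃ C₄ : ℝ) (hβ : β ∈ Set.Ioo (0 : ℝ) 1)
    (hC₂ : 0 ≤ C₂) (hC₃ : 0 ≤ C₃) (hC₄ : 0 ≤ C₄)
    (u α : ℕ → ℝ) (hu : ∀ k, 0 ≤ u k) (hα : ∀ k, 0 ≤ α k)
    (hαlim : Filter.Tendsto α Filter.atTop (nhds 0))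
    (hαsq : Summable (fun k => (α k) ^ 2))
    (hrec : ∀ k, 1 ≤ k →
      u (k + 1) ≤ C₂ * β ^ (k - 1) + C₃ * ∑ l ∈ Finset.Ico 1 k, β ^ (k - 1 - l) * α l
          + C₄ * α k) :
    Filter.Tendsto u Filter.atTop (nhds 0) ∧ Summable (fun k => α k * u k) :=
  stmt11_general β C₂ C₃ C₄ hβ u α hu hαsq hrec
end
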